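/- If λ is an eigenvalue of the 2N×2N periodic Jacobi matrix Q(b,a), then −λ is an eigenvalue of Q(S̃(b,a)). Concretely: if v ∈ ℂ^{2N} satisfies Q(b,a)v = λv, then the vector w defined by w_k = (−1)^{k+1} v_{σ(k)} for a suitable index permutation σ satisfies Q(S̃(b,a))w = −λw. -/

import Mathlib

/-!
Reading indices backwards, `k ↦ c - k`, preserves the periodic tridiagonal pattern but swaps the
roles of the two off-diagonal couplings of a row, so the reflected vector satisfies the
three-term recurrence of the Jacobi matrix whose diagonal is reflected and whose off-diagonal
is reflected with a shift by one. Multiplying by the alternating sign `(-1)^(k+1)`, which is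
well defined around the cycle because its length `2N` is even, flips the sign of both
off-diagonal terms, i.e. of the eigenvalue once the diagonal is negated as well. With `c = -2`
the reflected coefficients are exactly `S̃(b,a)` read through `Fin (2N) → Fin N`, `i ↦ i % N`.
-/

open Matrix Fin.CommRing

namespace Fin

def modNatRingHom (m n : ℕ) [NeZero (m * n)] [NeZero n] : Fin (m * n) →+* Fin n where
  toFun := modNat
  map_one' := by ext; simp [modNat, Nat.mod_mod_of_dvd _ (dvd_mul_left n m)]
  map_mul' i j := by
    ext; simp [modNat, val_mul, Nat.mod_mod_of_dvd _ (dvd_mul_left n m), Nat.mul_mod]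
  map_zero' := by ext; simp [modNat]
  map_add' i j := by
    ext; simp [modNat, val_add, Nat.mod_mod_of_dvd _ (dvd_mul_left n m), Nat.add_mod]

lemma neg_one_pow_val_add_one {R : Type*} [Ring R] {M : ℕ} [NeZero M] (hM : Even M)
    (k : Fin M) : (-1 : R) ^ ((k + 1 : Fin M) : ℕ) = -(-1) ^ (k : ℕ) := by
  have h2M : 2 ∣ M := even_iff_two_dvd.mp hM
  have h1M : 1 < M := by have := NeZero.ne M; obtain ⟨r, rfl⟩ := hM; omega
  rw [neg_one_pow_eq_pow_mod_two, val_add, Nat.mod_mod_of_dvd _ h2M, val_one',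
    Nat.mod_eq_of_lt h1M, ← neg_one_pow_eq_pow_mod_two, pow_succ, mul_neg_one]

end Fin

section PeriodicJacobi

variable {ι R : Type*} [DecidableEq ι]

def periodicJacobi [Add ι] [One ι] [Zero R] (d u : ι → R) : Matrix ι ι R :=
  of fun i j => if i = j then d i else if j = i + 1 then u i else if i = j + 1 then u j else 0

lemma periodicJacobi_map [Add ι] [One ι] {S : Type*} [Zero R] [Zero S] (d u : ι → R)
    {f : R → S} (hf : f 0 = 0) :
    (periodicJacobi d u).map f = periodicJacobi (f ∘ d) (f ∘ u) := by
  ext i j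
  simp only [periodicJacobi, map_apply, of_apply]
  split_ifs <;> simp [hf]

lemma periodicJacobi_row [AddGroupWithOne ι] [AddZeroClass R] (h1 : (1 : ι) ≠ 0)
    (h2 : (2 : ι) ≠ 0) (d u : ι → R) (k : ι) :
    periodicJacobi d u k =
      Pi.single k (d k) + Pi.single (k + 1) (u k) + Pi.single (k - 1) (u (k - 1)) := by
  have hk1 : k + 1 ≠ k := by simpa using h1
  have hk2 : k - 1 ≠ k := by simpa [sub_eq_iff_eq_add] using h1
  have hk3 : k - 1 ≠ k + 1 := by
    rwa [ne_eq, sub_eq_iff_eq_add, add_assoc, left_eq_add, one_add_one_eq_two]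
  ext j
  simp only [periodicJacobi, of_apply, Pi.add_apply, Pi.single_apply, eq_comm (a := k),
    ← eq_sub_iff_add_eq]
  by_cases hj : j = k
  · simp [hj, hk1.symm, hk2.symm]
  by_cases hj1 : j = k + 1
  · simp [hj1, hk1, hk3.symm]
  by_cases hj2 : j = k - 1
  · simp [hj2, hk2, hk3]
  simp [hj, hj1, hj2]

lemma periodicJacobi_mulVec_apply [AddGroupWithOne ι] [Fintype ι] [NonUnitalNonAssocSemiring R]
    (h1 : (1 : ι) ≠ 0) (h2 : (2 : ι) ≠ 0) (d u x : ι → R) (k : ι) :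
    (periodicJacobi d u *ᵥ x) k = d k * x k + u k * x (k + 1) + u (k - 1) * x (k - 1) := by
  rw [mulVec, periodicJacobi_row h1 h2, add_dotProduct, add_dotProduct, single_dotProduct,
    single_dotProduct, single_dotProduct]

lemma periodicJacobi_reflect_mulVec_apply [AddCommGroupWithOne ι] [Fintype ι] [CommRing R]
    (h1 : (1 : ι) ≠ 0) (h2 : (2 : ι) ≠ 0) (d u v s : ι → R)
    (hs : ∀ k, s (k + 1) = -s k) (c k : ι) :
    (periodicJacobi (fun k => -d (c - k)) (fun k => u (c - k - 1)) *ᵥ fun k => s k * v (c - k)) k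
      = -s k * (periodicJacobi d u *ᵥ v) (c - k) := by
  have hs' : s (k - 1) = -s k := by rw [← neg_neg (s (k - 1)), ← hs, sub_add_cancel]
  rw [periodicJacobi_mulVec_apply h1 h2, periodicJacobi_mulVec_apply h1 h2, hs k, hs',
    show c - (k + 1) = c - k - 1 by abel, show c - (k - 1) = c - k + 1 by abel,
    add_sub_cancel_right]
  ring

lemma periodicJacobi_reflect_mulVec [AddCommGroupWithOne ι] [Fintype ι] [CommRing R]
    (h1 : (1 : ι) ≠ 0) (h2 : (2 : ι) ≠ 0) (d u v s : ι → R)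
    (hs : ∀ k, s (k + 1) = -s k) (c : ι) {lam : R} (hv : periodicJacobi d u *ᵥ v = lam • v) :
    periodicJacobi (fun k => -d (c - k)) (fun k => u (c - k - 1)) *ᵥ (fun k => s k * v (c - k))
      = (-lam) • fun k => s k * v (c - k) := by
  ext k
  rw [periodicJacobi_reflect_mulVec_apply h1 h2 d u v s hs, hv]
  simp only [Pi.smul_apply, smul_eq_mul]
  ring

end PeriodicJacobi

/-- If `λ` is an eigenvalue of the `2N×2N` periodic Jacobi matrix `Q(b,a)`, then `−λ`
is an eigenvalue of `Q(S̃(b,a))`; concretely, from an eigenvector `v ∈ ℂ^{2N}` one gets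
an eigenvector `w` with `w_k = (−1)^{k+1} v_{σ(k)}` for a suitable index permutation `σ`. -/
theorem spec_Q_reversal (N : ℕ) [NeZero N] [NeZero (2 * N)] (hN : 2 ≤ N)
    (b a : Fin N → ℝ)
    (Q : (Fin N → ℝ) → (Fin N → ℝ) → Matrix (Fin (2 * N)) (Fin (2 * N)) ℝ)
    (hQ : ∀ b' a' : Fin N → ℝ, Q b' a' = Matrix.of fun i j : Fin (2 * N) =>
      if i = j then b' ⟨(i : ℕ) % N, Nat.mod_lt _ (by omega)⟩
      else if j = i + 1 then a' ⟨(i : ℕ) % N, Nat.mod_lt _ (by omega)⟩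
      else if i = j + 1 then a' ⟨(j : ℕ) % N, Nat.mod_lt _ (by omega)⟩
      else 0)
    (Sb Sa : Fin N → ℝ)
    (hSb : ∀ j, Sb j = -b (-(j + 2))) (hSa : ∀ j, Sa j = a (-(j + 3)))
    (lam : ℂ) (v : Fin (2 * N) → ℂ) (hv : v ≠ 0)
    (hev : ((Q b a).map (Complex.ofReal)).mulVec v = lam • v) :
    ∃ σ : Equiv.Perm (Fin (2 * N)),
      (fun k : Fin (2 * N) => (-1 : ℂ) ^ ((k : ℕ) + 1) * v (σ k)) ≠ 0 ∧
      ((Q Sb Sa).map (Complex.ofReal)).mulVec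
          (fun k : Fin (2 * N) => (-1 : ℂ) ^ ((k : ℕ) + 1) * v (σ k)) =
        (-lam) • fun k : Fin (2 * N) => (-1 : ℂ) ^ ((k : ℕ) + 1) * v (σ k) := by
  set ι := Fin.modNatRingHom 2 N
  have hQι : ∀ b' a', (Q b' a').map Complex.ofReal
      = periodicJacobi (fun i => (b' (ι i) : ℂ)) (fun i => (a' (ι i) : ℂ)) := fun b' a' => by
    rw [hQ]
    exact periodicJacobi_map (b' ∘ ι) (a' ∘ ι) Complex.ofReal_zero
  have hS : (Q Sb Sa).map Complex.ofReal = periodicJacobi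
      (fun k => -(b (ι (-2 - k)) : ℂ)) (fun k => (a (ι (-2 - k - 1)) : ℂ)) := by
    rw [hQι]
    congr 1 <;> funext k
    · rw [hSb, map_sub, map_neg, map_ofNat, Complex.ofReal_neg, neg_sub_left, add_comm]
    · rw [hSa, map_sub, map_sub, map_neg, map_ofNat, map_one]
      congr 3
      ring
  have h1 : (1 : Fin (2 * N)) ≠ 0 :=
    Fin.ne_of_val_ne (show 1 % (2 * N) ≠ 0 by rw [Nat.mod_eq_of_lt (by omega)]; omega)
  have h2 : (2 : Fin (2 * N)) ≠ 0 :=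
    Fin.ne_of_val_ne (show 2 % (2 * N) ≠ 0 by rw [Nat.mod_eq_of_lt (by omega)]; omega)
  refine ⟨Equiv.subLeft (-2), ?_, ?_⟩
  · intro h
    refine hv (funext fun m => ?_)
    simpa using congrFun h (-2 - m)
  · have hs (k : Fin (2 * N)) :
        (-1 : ℂ) ^ (((k + 1 : Fin (2 * N)) : ℕ) + 1) = -(-1) ^ ((k : ℕ) + 1) := by
      rw [pow_succ, pow_succ, Fin.neg_one_pow_val_add_one ⟨N, two_mul N⟩, neg_mul]
    rw [hQι] at hev
    rw [hS]
    exact (periodicJacobi_reflect_mulVec h1 h2 _ _ v (fun k => (-1 : ℂ) ^ ((k : ℕ) + 1)) hs (-2)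
      hev :)
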